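/- Let x_n be a sequence of independent G-valued random variables with x_n ∈ U almost surely for every n and with U-truncated means b_n, and suppose x̂_n = x_1 x_2 ⋯ x_n converges almost surely in G. Then b_n → e and E[‖φ(x_n) − φ(b_n)‖²] → 0 as n → ∞. -/

import Mathlib

/-!
Almost sure convergence of the products forces `x n = (x 0 ⋯ x (n-1))⁻¹ (x 0 ⋯ x n) → 1` almost
surely. Since `φ` is bounded on the compact set `closure U`, bounded convergence then gives
`φ (b n) = E[φ (x n)] → φ 1 = 0` and `E ‖φ (x n) - E[φ (x n)]‖² → 0`, and `b n = ψ (φ (b n)) → 1`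
by continuity of the inverse chart `ψ` at `0`.
-/

open MeasureTheory ProbabilityTheory Filter Topology
open scoped Manifold

/-- Ordered product `x 0 * x 1 * ⋯ * x (n-1)` in a (possibly noncommutative) monoid. -/
def partialProd {G : Type*} [Monoid G] (x : ℕ → G) (n : ℕ) : G :=
  ((List.range n).map x).prod

theorem partialProd_succ {G : Type*} [Monoid G] (x : ℕ → G) (n : ℕ) :
    partialProd x (n + 1) = partialProd x n * x n := by
  simp [partialProd, List.range_succ]

theorem tendsto_one_of_tendsto_partialProd {G : Type*} [Group G] [TopologicalSpace G]
    [IsTopologicalGroup G] {x : ℕ → G} {l : G}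
    (hx : Tendsto (partialProd x) atTop (𝓝 l)) : Tendsto x atTop (𝓝 1) := by
  have h : Tendsto (fun n => (partialProd x n)⁻¹ * partialProd x (n + 1)) atTop (𝓝 (l⁻¹ * l)) :=
    hx.inv.mul (hx.comp (tendsto_add_atTop_nat 1))
  simpa [partialProd_succ] using h

theorem ContinuousOn.aestronglyMeasurable_comp_of_ae_mem {α β Ω : Type*} [TopologicalSpace α]
    [MeasurableSpace α] [OpensMeasurableSpace α] [TopologicalSpace β]
    [SecondCountableTopologyEither α β]
    [TopologicalSpace.PseudoMetrizableSpace β] [MeasurableSpace Ω]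
    {μ : Measure Ω} {f : α → β} {s : Set α} {X : Ω → α} (hf : ContinuousOn f s)
    (hs : MeasurableSet s) (hX : Measurable X) (hXs : ∀ᵐ ω ∂μ, X ω ∈ s) :
    AEStronglyMeasurable (fun ω => f (X ω)) μ := by
  have hrestrict : (μ.map X).restrict s = μ.map X :=
    Measure.restrict_eq_self_of_ae_mem ((ae_map_iff hX.aemeasurable hs).2 hXs)
  exact (hrestrict ▸ hf.aestronglyMeasurable hs).comp_aemeasurable hX.aemeasurable

section BoundedConvergence

variable {Ω E : Type*} [MeasurableSpace Ω] {P : Measure Ω} [IsProbabilityMeasure P]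
  [NormedAddCommGroup E] [NormedSpace ℝ E] [CompleteSpace E]
  {Y : ℕ → Ω → E} {C : ℝ} {y : E}

theorem tendsto_integral_of_ae_tendsto_of_norm_le
    (hY : ∀ n, AEStronglyMeasurable (Y n) P) (hbd : ∀ n, ∀ᵐ ω ∂P, ‖Y n ω‖ ≤ C)
    (hlim : ∀ᵐ ω ∂P, Tendsto (fun n => Y n ω) atTop (𝓝 y)) :
    Tendsto (fun n => ∫ ω, Y n ω ∂P) atTop (𝓝 y) := by
  simpa using tendsto_integral_of_dominated_convergence (fun _ => C) hY (integrable_const C)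
    hbd hlim

theorem tendsto_integral_norm_sub_integral_sq
    (hY : ∀ n, AEStronglyMeasurable (Y n) P) (hbd : ∀ n, ∀ᵐ ω ∂P, ‖Y n ω‖ ≤ C)
    (hlim : ∀ᵐ ω ∂P, Tendsto (fun n => Y n ω) atTop (𝓝 y)) :
    Tendsto (fun n => ∫ ω, ‖Y n ω - ∫ ω', Y n ω' ∂P‖ ^ 2 ∂P) atTop (𝓝 0) := by
  have hmean := tendsto_integral_of_ae_tendsto_of_norm_le hY hbd hlim
  have hmean_bd : ∀ n, ‖∫ ω, Y n ω ∂P‖ ≤ C := fun n => by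
    simpa using norm_integral_le_of_norm_le_const (hbd n)
  refine tendsto_integral_of_ae_tendsto_of_norm_le (C := (2 * C) ^ 2)
    (fun n => ((hY n).sub aestronglyMeasurable_const).norm.pow 2) (fun n => ?_) ?_
  · filter_upwards [hbd n] with ω hω
    rw [norm_pow, norm_norm]
    refine pow_le_pow_left₀ (norm_nonneg _) ?_ 2
    linarith [norm_sub_le (Y n ω) (∫ ω', Y n ω' ∂P), hmean_bd n]
  · filter_upwards [hlim] with ω hω
    simpa using ((hω.sub hmean).norm).pow 2

end BoundedConvergence

/-- If `x_n ∈ U` almost surely and the products `x_1 ⋯ x_n` converge a.s. in `G`, then the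
`U`-truncated means satisfy `b_n → e` and `E[‖φ(x_n) − φ(b_n)‖²] → 0` as `n → ∞`. -/
theorem truncated_means_tendsto_one
    {d : ℕ} {G : Type*} [Group G] [TopologicalSpace G] [IsTopologicalGroup G]
    [ChartedSpace (EuclideanSpace ℝ (Fin d)) G]
    [MeasurableSpace G] [BorelSpace G]
    -- the chart data
    {U : Set G} (hU : U ∈ 𝓝 (1 : G)) (hUcpt : IsCompact (closure U))
    {φ : G → EuclideanSpace ℝ (Fin d)} {W : Set G} (hUW : closure U ⊆ W)
    (hφ : ContMDiffOn (𝓡 d) 𝓘(ℝ, EuclideanSpace ℝ (Fin d)) (⊤ : ℕ∞) φ W)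
    {ψ : EuclideanSpace ℝ (Fin d) → G}
    (hψ : ContMDiffOn 𝓘(ℝ, EuclideanSpace ℝ (Fin d)) (𝓡 d) (⊤ : ℕ∞) ψ (φ '' U))
    (hψφ : ∀ g ∈ U, ψ (φ g) = g)
    (hconv : Convex ℝ (φ '' U)) (hnhds : φ '' U ∈ 𝓝 (0 : EuclideanSpace ℝ (Fin d)))
    (hφ1 : φ 1 = 0)
    -- the independent random variables
    {Ω : Type*} [MeasurableSpace Ω] {P : Measure Ω} [IsProbabilityMeasure P]
    {x : ℕ → Ω → G} (hmeas : ∀ n, Measurable (x n))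
    (hxU : ∀ n, ∀ᵐ ω ∂P, x n ω ∈ U)
    -- the `U`-truncated means
    {b : ℕ → G} (hbU : ∀ n, b n ∈ U)
    (hb : ∀ n, φ (b n) = ∫ ω, Set.indicator {ω | x n ω ∈ U} (fun ω => φ (x n ω)) ω ∂P)
    (hconv : ∀ᵐ ω ∂P, ∃ l : G,
      Tendsto (fun n => partialProd (fun i => x i ω) n) atTop (𝓝 l)) :
    Tendsto b atTop (𝓝 (1 : G)) ∧
      Tendsto (fun n => ∫ ω, ‖φ (x n ω) - φ (b n)‖ ^ 2 ∂P) atTop (𝓝 0) := by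
  have hφU : ContinuousOn φ (closure U) := hφ.continuousOn.mono hUW
  obtain ⟨C, hC⟩ := hUcpt.exists_bound_of_continuousOn hφU
  have hx_closure : ∀ n, ∀ᵐ ω ∂P, x n ω ∈ closure U := fun n => (hxU n).mono fun _ h => subset_closure h
  have hY : ∀ n, AEStronglyMeasurable (fun ω => φ (x n ω)) P := fun n =>
    hφU.aestronglyMeasurable_comp_of_ae_mem isClosed_closure.measurableSet (hmeas n) (hx_closure n)
  have hbd : ∀ n, ∀ᵐ ω ∂P, ‖φ (x n ω)‖ ≤ C := fun n => (hx_closure n).mono fun ω h => hC _ h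
  have hlim : ∀ᵐ ω ∂P, Tendsto (fun n => φ (x n ω)) atTop (𝓝 0) := by
    filter_upwards [hconv] with ω ⟨l, hl⟩
    rw [← hφ1]
    exact (hφU.continuousAt (mem_of_superset hU subset_closure)).tendsto.comp
      (tendsto_one_of_tendsto_partialProd hl)
  have hb_integral : ∀ n, φ (b n) = ∫ ω, φ (x n ω) ∂P := fun n =>
    (hb n).trans (integral_congr_ae <| (hxU n).mono fun ω h => Set.indicator_of_mem h _)
  have hφb : Tendsto (fun n => φ (b n)) atTop (𝓝 0) := by
    simpa only [hb_integral] using tendsto_integral_of_ae_tendsto_of_norm_le hY hbd hlim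
  refine ⟨?_, by simpa only [hb_integral] using tendsto_integral_norm_sub_integral_sq hY hbd hlim⟩
  have hψ0 : ψ 0 = 1 := by rw [← hφ1, hψφ 1 (mem_of_mem_nhds hU)]
  have hψb := (hψ.continuousOn.continuousAt hnhds).tendsto.comp hφb
  rw [hψ0] at hψb
  exact hψb.congr fun n => hψφ _ (hbU n)
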